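/- arXiv:2503.02116 — 2 statements merged into one kernel-verified Lean document; each statement's English description precedes it below -/
import Mathlib

section
/- Let π ∈ (0,1)^n, V(x) the KL divergence between g_π and g_x, and f the mean-field vector field f_i(x) = ∑_r g_π(r) f̃_i(r,x). Then for every x ∈ (0,1)^n, ⟨∇V(x), f(x)⟩ = − ∑_{i=1}^n f_i(x)^2/(x_i(1−x_i)) ≤ 0, with equality if and only if f(x) = 0. -/
open Real Finset

/-- Sign of a Boolean: `true ↦ +1`, `false ↦ -1`. -/
def sg (b : Bool) : ℝ := if b then 1 else -1

/-- Output distribution (cosh form). -/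
noncomputable def gc {n : ℕ} (x : Fin n → ℝ) (r : Fin n → ℝ) : ℝ :=
  Real.cosh ((∑ j, r j * Real.log ((1 - x j) / x j)) / 2) *
    ∏ j, Real.sqrt (x j * (1 - x j))

/-- Update field coordinate (tanh form). -/
noncomputable def ft {n : ℕ} (r x : Fin n → ℝ) (i : Fin n) : ℝ :=
  (1/2) * (1 - Real.tanh ((∑ j, r j * Real.log ((1 - x j) / x j)) / 2) * r i) - x i

/-- KL divergence from `g_p` to `g_x` (sum over the hypercube `{±1}^n`). -/
noncomputable def V {n : ℕ} (p x : Fin n → ℝ) : ℝ :=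
  ∑ r : Fin n → Bool, gc p (fun k => sg (r k)) *
    Real.log (gc p (fun k => sg (r k)) / gc x (fun k => sg (r k)))

/-- Mean-field vector field `f_i(x) = E_{R ∼ g_p}[f̃_i(R,x)]`. -/
noncomputable def fvec {n : ℕ} (p x : Fin n → ℝ) (i : Fin n) : ℝ :=
  ∑ r : Fin n → Bool, gc p (fun k => sg (r k)) * ft (fun k => sg (r k)) x i

/-!
Along the `i`-th coordinate, `log g_x(r)` is `log cosh (ℓ · r / 2)` plus a sum of
`log √(x_j (1 - x_j))`, and since `d/dx log ((1 - x) / x) = -1 / (x (1 - x))` its partial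
derivative is exactly `f̃_i(r, x) / (x_i (1 - x_i))`. Averaging against `g_π` gives
`∂_i V = -f_i / (x_i (1 - x_i))`, so `⟨∇V, f⟩ = -∑ f_i² / (x_i (1 - x_i))`, a sum of
nonpositive terms that vanishes exactly when every `f_i` does.
-/

lemma hasDerivAt_log_one_sub_div {a : ℝ} (ha₀ : a ≠ 0) (ha₁ : a ≠ 1) :
    HasDerivAt (fun t => log ((1 - t) / t)) (-(a * (1 - a))⁻¹) a := by
  have h₁ : 1 - a ≠ 0 := sub_ne_zero.mpr (Ne.symm ha₁)
  have h := (((hasDerivAt_id' a).const_sub 1).fun_div (hasDerivAt_id' a) ha₀).log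
    (div_ne_zero h₁ ha₀)
  convert h using 1
  field_simp
  ring

lemma hasDerivAt_log_sqrt_mul_one_sub {a : ℝ} (ha : a ∈ Set.Ioo (0 : ℝ) 1) :
    HasDerivAt (fun t => log √(t * (1 - t))) ((1 - 2 * a) / (2 * (a * (1 - a)))) a := by
  have hq : 0 < a * (1 - a) := mul_pos ha.1 (sub_pos.mpr ha.2)
  have h := (((hasDerivAt_id' a).fun_mul ((hasDerivAt_id' a).const_sub 1)).sqrt hq.ne').log
    (sqrt_pos.mpr hq).ne'
  convert h using 1
  rw [div_div, mul_assoc, mul_self_sqrt hq.le]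
  ring

lemma hasDerivAt_sum_update {ι : Type*} [Fintype ι] [DecidableEq ι] (F : ι → ℝ → ℝ)
    (x : ι → ℝ) (i : ι) {F' : ℝ} (hF : HasDerivAt (F i) F' (x i)) :
    HasDerivAt (fun t => ∑ j, F j (Function.update x i t j)) F' (x i) := by
  have h : ∀ j ∈ (univ : Finset ι), HasDerivAt (fun t => F j (Function.update x i t j))
      ((Pi.single i F' : ι → ℝ) j) (x i) := by
    intro j _
    rcases eq_or_ne j i with rfl | hj
    · simpa using hF
    · simpa [Function.update_of_ne hj, hj] using hasDerivAt_const (x i) (F j (x j))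
  simpa using HasDerivAt.fun_sum h

lemma sqrt_mul_one_sub_pos {a : ℝ} (ha : a ∈ Set.Ioo (0 : ℝ) 1) : 0 < √(a * (1 - a)) :=
  sqrt_pos.mpr (mul_pos ha.1 (sub_pos.mpr ha.2))

section

variable {n : ℕ}

lemma gc_pos {y : Fin n → ℝ} (hy : ∀ j, y j ∈ Set.Ioo (0 : ℝ) 1) (r : Fin n → ℝ) :
    0 < gc y r :=
  mul_pos (cosh_pos _) (prod_pos fun j _ => sqrt_mul_one_sub_pos (hy j))

lemma log_gc {y : Fin n → ℝ} (hy : ∀ j, y j ∈ Set.Ioo (0 : ℝ) 1) (r : Fin n → ℝ) :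
    log (gc y r) = log (cosh ((∑ j, r j * log ((1 - y j) / y j)) / 2)) +
      ∑ j, log √(y j * (1 - y j)) := by
  rw [gc, log_mul (cosh_pos _).ne' (prod_pos fun j _ => sqrt_mul_one_sub_pos (hy j)).ne',
    log_prod fun j _ => (sqrt_mul_one_sub_pos (hy j)).ne']

lemma V_eq_sub {y : Fin n → ℝ} (hy : ∀ j, y j ∈ Set.Ioo (0 : ℝ) 1) (p : Fin n → ℝ) :
    V p y = ∑ r : Fin n → Bool, gc p (fun k => sg (r k)) * log (gc p (fun k => sg (r k))) -
      ∑ r : Fin n → Bool, gc p (fun k => sg (r k)) * log (gc y (fun k => sg (r k))) := by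
  rw [V, ← sum_sub_distrib]
  refine sum_congr rfl fun r _ => ?_
  rcases eq_or_ne (gc p (fun k => sg (r k))) 0 with h | h
  · simp [h]
  · rw [log_div h (gc_pos hy _).ne', mul_sub]

lemma eventually_update_mem_Ioo {x : Fin n → ℝ} (hx : ∀ j, x j ∈ Set.Ioo (0 : ℝ) 1)
    (i : Fin n) : ∀ᶠ t in nhds (x i), ∀ j, Function.update x i t j ∈ Set.Ioo (0 : ℝ) 1 := by
  filter_upwards [Ioo_mem_nhds (hx i).1 (hx i).2] with t ht j
  rcases eq_or_ne j i with rfl | hj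
  · simpa using ht
  · simpa [Function.update_of_ne hj] using hx j

lemma hasDerivAt_log_gc {x : Fin n → ℝ} (hx : ∀ j, x j ∈ Set.Ioo (0 : ℝ) 1) (i : Fin n)
    (r : Fin n → ℝ) :
    HasDerivAt (fun t => log (gc (Function.update x i t) r))
      (ft r x i / (x i * (1 - x i))) (x i) := by
  have hxi := hx i
  have hlogit := hasDerivAt_sum_update (fun j t => r j * log ((1 - t) / t)) x i
    ((hasDerivAt_log_one_sub_div hxi.1.ne' hxi.2.ne).const_mul (r i))
  have hcosh := ((hlogit.div_const 2).cosh).log (cosh_pos _).ne'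
  have hsqrt := hasDerivAt_sum_update (fun j t => log √(t * (1 - t))) x i
    (hasDerivAt_log_sqrt_mul_one_sub hxi)
  refine (hcosh.add hsqrt).congr_of_eventuallyEq ?_ |>.congr_deriv ?_
  · filter_upwards [eventually_update_mem_Ioo hx i] with t ht
    exact log_gc ht r
  · simp only [Function.update_eq_self]
    rw [ft, tanh_eq_sinh_div_cosh]
    generalize (∑ j, r j * log ((1 - x j) / x j)) / 2 = s
    have := (cosh_pos s).ne'
    field_simp
    ring

lemma hasDerivAt_V (p : Fin n → ℝ) {x : Fin n → ℝ} (hx : ∀ j, x j ∈ Set.Ioo (0 : ℝ) 1)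
    (i : Fin n) :
    HasDerivAt (fun t => V p (Function.update x i t)) (-fvec p x i / (x i * (1 - x i))) (x i) := by
  have hcross := HasDerivAt.fun_sum (u := univ) fun (r : Fin n → Bool) _ =>
    (hasDerivAt_log_gc hx i (fun k => sg (r k))).const_mul (gc p (fun k => sg (r k)))
  have h := (hasDerivAt_const (x i)
    (∑ r : Fin n → Bool, gc p (fun k => sg (r k)) * log (gc p (fun k => sg (r k))))).fun_sub hcross
  refine h.congr_of_eventuallyEq ?_ |>.congr_deriv ?_
  · filter_upwards [eventually_update_mem_Ioo hx i] with t ht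
    exact V_eq_sub ht p
  · rw [fvec, zero_sub, neg_div, sum_div]
    exact congrArg _ (sum_congr rfl fun r _ => by ring)

end

theorem stmt6_general (n : ℕ) (p : Fin n → ℝ)
    (x : Fin n → ℝ) (hx : ∀ i, x i ∈ Set.Ioo (0:ℝ) 1) :
    (∑ i, deriv (fun t => V p (Function.update x i t)) (x i) * fvec p x i)
        = -∑ i, (fvec p x i)^2 / (x i * (1 - x i)) ∧
    (∑ i, deriv (fun t => V p (Function.update x i t)) (x i) * fvec p x i) ≤ 0 ∧
    ((∑ i, deriv (fun t => V p (Function.update x i t)) (x i) * fvec p x i) = 0 ↔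
      ∀ i, fvec p x i = 0) := by
  have hq : ∀ i, 0 < x i * (1 - x i) := fun i => mul_pos (hx i).1 (sub_pos.mpr (hx i).2)
  have hinner : ∑ i, deriv (fun t => V p (Function.update x i t)) (x i) * fvec p x i
      = -∑ i, (fvec p x i)^2 / (x i * (1 - x i)) := by
    rw [← sum_neg_distrib]
    exact sum_congr rfl fun i _ => by rw [(hasDerivAt_V p hx i).deriv]; ring
  have hterm : ∀ i ∈ univ, 0 ≤ (fvec p x i)^2 / (x i * (1 - x i)) :=
    fun i _ => div_nonneg (sq_nonneg _) (hq i).le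
  refine ⟨hinner, hinner ▸ neg_nonpos.mpr (sum_nonneg hterm), ?_⟩
  rw [hinner, neg_eq_zero, sum_eq_zero_iff_of_nonneg hterm]
  simp [(hq _).ne']

theorem stmt6 (n : ℕ) (p : Fin n → ℝ) (hp : ∀ i, p i ∈ Set.Ioo (0:ℝ) 1)
    (x : Fin n → ℝ) (hx : ∀ i, x i ∈ Set.Ioo (0:ℝ) 1) :
    (∑ i, deriv (fun t => V p (Function.update x i t)) (x i) * fvec p x i)
        = -∑ i, (fvec p x i)^2 / (x i * (1 - x i)) ∧
    (∑ i, deriv (fun t => V p (Function.update x i t)) (x i) * fvec p x i) ≤ 0 ∧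
    ((∑ i, deriv (fun t => V p (Function.update x i t)) (x i) * fvec p x i) = 0 ↔
      ∀ i, fvec p x i = 0) :=
  stmt6_general n p x hx
end

section
/- Let π ∈ (0,1)^n with n ≥ 2 and h(a,b) = ab + (1−a)(1−b). For any zero x* ∈ (0,1)^n of the mean-field vector field f and any distinct i, j ∈ [n]: 1 − x*_i − x*_j ≤ h(π_i, π_j), i.e., x*_i + x*_j ≥ h(π_i, 1−π_j). (This follows from averaging f_i(x*)+f_j(x*)=0 and bounding |tanh| ≤ 1: E[tanh(⟨R,ℓ_{x*}⟩/2)(R_i+R_j)/2] ≤ P(R_i = R_j) = h(π_i,π_j), where R ∼ g_π.) -/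
open Real Finset

/-- `h(a,b) = ab + (1-a)(1-b)`. -/
def hh (a b : ℝ) : ℝ := a * b + (1 - a) * (1 - b)

/-!
Let `Q` be the product measure on `{±1}ⁿ` with `Q(Rₖ = +1) = 1 - πₖ`. Since
`cosh y = (eʸ + e⁻ʸ)/2`, `g_π(r) = (Q(r) + Q(-r))/2`, so `g_π` and `Q` give the same mean to
every flip-invariant function. Hence `∑ g_π = 1` and `E[RᵢRⱼ] = (1 - 2πᵢ)(1 - 2πⱼ)`, which gives
`P(Rᵢ = Rⱼ) = h(πᵢ, πⱼ)`. At a zero of `f`, `E[tanh(⟨R, ℓ⟩/2) Rᵢ] = 1 - 2xᵢ`; averaging over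
`i` and `j` and using `|tanh| ≤ 1` together with `|(Rᵢ + Rⱼ)/2| = 1[Rᵢ = Rⱼ]` gives
`|1 - xᵢ - xⱼ| ≤ h(πᵢ, πⱼ)`.
-/

section

variable {n : ℕ}

lemma exp_half_sg_mul_log_odds_mul_sqrt {p : ℝ} (hp : p ∈ Set.Ioo (0 : ℝ) 1) (b : Bool) :
    exp (sg b * log ((1 - p) / p) / 2) * √(p * (1 - p)) = if b then 1 - p else p := by
  obtain ⟨hp0, hp1⟩ := hp
  have hq : (0 : ℝ) < 1 - p := by linarith
  cases b
  · have hsq : p / (1 - p) * (p * (1 - p)) = p ^ 2 := by field_simp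
    rw [sg, if_neg Bool.false_ne_true, neg_one_mul, ← log_inv, inv_div, exp_half,
      exp_log (by positivity), ← sqrt_mul (by positivity), hsq, sqrt_sq hp0.le]
    rfl
  · have hsq : (1 - p) / p * (p * (1 - p)) = (1 - p) ^ 2 := by field_simp
    rw [sg, if_pos rfl, one_mul, exp_half, exp_log (by positivity),
      ← sqrt_mul (by positivity), hsq, sqrt_sq hq.le]
    rfl

def bernoulliProd (p : Fin n → ℝ) (r : Fin n → Bool) : ℝ :=
  ∏ k, if r k then 1 - p k else p k

lemma exp_mul_prod_sqrt_eq_bernoulliProd {p : Fin n → ℝ} (hp : ∀ k, p k ∈ Set.Ioo (0 : ℝ) 1)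
    (r : Fin n → Bool) :
    exp ((∑ k, sg (r k) * log ((1 - p k) / p k)) / 2) * ∏ k, √(p k * (1 - p k)) =
      bernoulliProd p r := by
  rw [sum_div, exp_sum, ← prod_mul_distrib]
  exact prod_congr rfl fun k _ => exp_half_sg_mul_log_odds_mul_sqrt (hp k) (r k)

lemma gc_eq_bernoulliProd_add_flip {p : Fin n → ℝ} (hp : ∀ k, p k ∈ Set.Ioo (0 : ℝ) 1)
    (r : Fin n → Bool) :
    gc p (fun k => sg (r k)) = (bernoulliProd p r + bernoulliProd p (fun k => !r k)) / 2 := by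
  have hflip : -((∑ k, sg (r k) * log ((1 - p k) / p k)) / 2) =
      (∑ k, sg (!r k) * log ((1 - p k) / p k)) / 2 := by
    rw [← neg_div, ← sum_neg_distrib]
    congr 1
    exact sum_congr rfl fun k _ => by cases r k <;> simp [sg]
  rw [gc, cosh_eq, div_mul_eq_mul_div, add_mul, exp_mul_prod_sqrt_eq_bernoulliProd hp, hflip,
    exp_mul_prod_sqrt_eq_bernoulliProd hp (fun k => !r k)]

lemma sum_gc_mul_of_flip_invariant {p : Fin n → ℝ} (hp : ∀ k, p k ∈ Set.Ioo (0 : ℝ) 1)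
    {φ : (Fin n → Bool) → ℝ} (hφ : ∀ r, φ (fun k => !r k) = φ r) :
    ∑ r : Fin n → Bool, gc p (fun k => sg (r k)) * φ r = ∑ r, bernoulliProd p r * φ r := by
  have hflip : ∑ r, bernoulliProd p (fun k => !r k) * φ r = ∑ r, bernoulliProd p r * φ r :=
    Fintype.sum_bijective (fun r k => !r k)
      (Function.Involutive.bijective fun r => funext fun k => Bool.not_not (r k)) _ _
      fun r => by rw [hφ]
  simp only [gc_eq_bernoulliProd_add_flip hp, div_mul_eq_mul_div, add_mul, ← sum_div,
    sum_add_distrib, hflip]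
  ring

lemma sum_bernoulliProd_mul_prod_sg (p : Fin n → ℝ) (s : Finset (Fin n)) :
    ∑ r, bernoulliProd p r * ∏ k ∈ s, sg (r k) = ∏ k ∈ s, (1 - 2 * p k) := by
  set f : Fin n → Bool → ℝ := fun k b => (if b then 1 - p k else p k) * if k ∈ s then sg b else 1
  have hfactor : ∀ r : Fin n → Bool, bernoulliProd p r * ∏ k ∈ s, sg (r k) = ∏ k, f k (r k) := by
    intro r
    rw [prod_mul_distrib, prod_ite_mem, univ_inter, bernoulliProd]
  rw [sum_congr rfl fun r _ => hfactor r, ← Fintype.prod_sum, ← univ_inter s, ← prod_ite_mem]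
  refine prod_congr rfl fun k _ => ?_
  by_cases hk : k ∈ s <;> simp [f, hk, sg]; ring

lemma sum_gc_eq_one {p : Fin n → ℝ} (hp : ∀ k, p k ∈ Set.Ioo (0 : ℝ) 1) :
    ∑ r : Fin n → Bool, gc p (fun k => sg (r k)) = 1 := by
  simpa using sum_gc_mul_of_flip_invariant hp (φ := fun _ => 1) (fun _ => rfl)
    |>.trans (sum_bernoulliProd_mul_prod_sg p ∅)

lemma sum_gc_mul_ite_eq_eq_hh {p : Fin n → ℝ} (hp : ∀ k, p k ∈ Set.Ioo (0 : ℝ) 1)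
    {i j : Fin n} (hij : i ≠ j) :
    ∑ r : Fin n → Bool, gc p (fun k => sg (r k)) * (if r i = r j then 1 else 0) =
      hh (p i) (p j) := by
  have hind : ∀ r : Fin n → Bool, (if r i = r j then (1 : ℝ) else 0) =
      (∏ k ∈ ∅, sg (r k) + ∏ k ∈ {i, j}, sg (r k)) / 2 := by
    intro r
    rw [prod_empty, prod_pair hij]
    cases r i <;> cases r j <;> norm_num [sg]
  rw [sum_gc_mul_of_flip_invariant hp fun r => by simp only [Bool.not_inj_iff]]
  simp only [hind, mul_div_assoc', mul_add, ← sum_div, sum_add_distrib,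
    sum_bernoulliProd_mul_prod_sg]
  rw [prod_empty, prod_pair hij, hh]
  ring

lemma gc_nonneg (p : Fin n → ℝ) (r : Fin n → ℝ) : 0 ≤ gc p r := by
  unfold gc
  positivity

lemma fvec_eq {p : Fin n → ℝ} (hp : ∀ k, p k ∈ Set.Ioo (0 : ℝ) 1) (x : Fin n → ℝ) (i : Fin n) :
    fvec p x i = (1 - 2 * x i - ∑ r : Fin n → Bool, gc p (fun k => sg (r k)) *
      (tanh ((∑ k, sg (r k) * log ((1 - x k) / x k)) / 2) * sg (r i))) / 2 := by
  have hsplit : ∀ r : Fin n → Bool, gc p (fun k => sg (r k)) * ft (fun k => sg (r k)) x i =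
      (1 / 2 - x i) * gc p (fun k => sg (r k)) - gc p (fun k => sg (r k)) *
        (tanh ((∑ k, sg (r k) * log ((1 - x k) / x k)) / 2) * sg (r i)) / 2 :=
    fun r => by rw [ft]; ring
  rw [fvec, sum_congr rfl fun r _ => hsplit r, sum_sub_distrib, ← mul_sum, ← sum_div,
    sum_gc_eq_one hp]
  ring

lemma abs_sum_gc_mul_avg_sg_le {p : Fin n → ℝ} (hp : ∀ k, p k ∈ Set.Ioo (0 : ℝ) 1)
    {i j : Fin n} (hij : i ≠ j) {A : (Fin n → Bool) → ℝ} (hA : ∀ r, |A r| ≤ 1) :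
    |∑ r : Fin n → Bool, gc p (fun k => sg (r k)) * (A r * ((sg (r i) + sg (r j)) / 2))| ≤
      hh (p i) (p j) := by
  have havg : ∀ r : Fin n → Bool,
      |(sg (r i) + sg (r j)) / 2| = if r i = r j then 1 else 0 := by
    intro r
    cases r i <;> cases r j <;> norm_num [sg]
  calc |∑ r : Fin n → Bool, gc p (fun k => sg (r k)) * (A r * ((sg (r i) + sg (r j)) / 2))|
      ≤ ∑ r, |gc p (fun k => sg (r k)) * (A r * ((sg (r i) + sg (r j)) / 2))| :=
        abs_sum_le_sum_abs _ _
    _ ≤ ∑ r : Fin n → Bool, gc p (fun k => sg (r k)) * (if r i = r j then 1 else 0) := by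
        refine sum_le_sum fun r _ => ?_
        rw [abs_mul, abs_mul, abs_of_nonneg (gc_nonneg _ _), havg]
        gcongr
        · exact gc_nonneg _ _
        · exact mul_le_of_le_one_left (by positivity) (hA r)
    _ = hh (p i) (p j) := sum_gc_mul_ite_eq_eq_hh hp hij

end

theorem stmt8_general (n : ℕ) (p : Fin n → ℝ) (hp : ∀ i, p i ∈ Set.Ioo (0:ℝ) 1)
    (x : Fin n → ℝ)
    (hzero : ∀ i, fvec p x i = 0) (i j : Fin n) (hij : i ≠ j) :
    1 - x i - x j ≤ hh (p i) (p j) ∧ hh (p i) (1 - p j) ≤ x i + x j := by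
  set A : (Fin n → Bool) → ℝ := fun r => tanh ((∑ k, sg (r k) * log ((1 - x k) / x k)) / 2)
  have hmoment : ∀ l, ∑ r : Fin n → Bool, gc p (fun k => sg (r k)) * (A r * sg (r l)) =
      1 - 2 * x l :=
    fun l => by linarith [fvec_eq hp x l, hzero l]
  have hE : ∑ r : Fin n → Bool, gc p (fun k => sg (r k)) * (A r * ((sg (r i) + sg (r j)) / 2)) =
      1 - x i - x j := by
    simp only [mul_add, add_div, sum_add_distrib, mul_div_assoc', ← sum_div, hmoment]
    ring
  have hbound := abs_sum_gc_mul_avg_sg_le hp hij (A := A) fun r => (abs_tanh_lt_one _).le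
  rw [hE, abs_le] at hbound
  have hflip : hh (p i) (1 - p j) = 1 - hh (p i) (p j) := by unfold hh; ring
  constructor <;> linarith

theorem stmt8 (n : ℕ) (hn : 2 ≤ n) (p : Fin n → ℝ) (hp : ∀ i, p i ∈ Set.Ioo (0:ℝ) 1)
    (x : Fin n → ℝ) (hx : ∀ i, x i ∈ Set.Ioo (0:ℝ) 1)
    (hzero : ∀ i, fvec p x i = 0) (i j : Fin n) (hij : i ≠ j) :
    1 - x i - x j ≤ hh (p i) (p j) ∧ hh (p i) (1 - p j) ≤ x i + x j :=
  stmt8_general n p hp x hzero i j hij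
end
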